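/- arXiv:2602.17882 — 6 statements merged into one kernel-verified Lean document; each statement's English description precedes it below -/
import Mathlib

section
/- The restricted measure projection π_K : K → [0, λ(K)] is surjective. -/
open MeasureTheory Set

/-- Measure projection `π_K`. -/
noncomputable def piProj (K : Set ℝ) (x : ℝ) : ℝ :=
  (volume (Set.Icc (sInf K) x ∩ K)).toReal

/-
`π_K` is monotone and 1-Lipschitz (the part of `K` in `(y, x]` has measure at most `x - y`),
and it runs from `0` at `min K` to `λ(K)` at `max K`, so by the intermediate value theorem every
`t ∈ [0, λ(K)]` is a value `π_K(x)` with `x ∈ [min K, max K]`. The largest point of `K` left of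
`x` exists by compactness and has the same value, since no point of `K` lies between the two.
-/

theorem volume_Icc_inter_le_add (K : Set ℝ) (a x y : ℝ) :
    volume (Icc a x ∩ K) ≤ volume (Icc a y ∩ K) + ENNReal.ofReal (x - y) := by
  have hcover : Icc a x ∩ K ⊆ (Icc a y ∩ K) ∪ Ioc y x := by
    rintro k ⟨⟨hak, hkx⟩, hk⟩
    rcases le_or_gt k y with hky | hyk
    · exact Or.inl ⟨⟨hak, hky⟩, hk⟩
    · exact Or.inr ⟨hyk, hkx⟩
  calc volume (Icc a x ∩ K) ≤ volume ((Icc a y ∩ K) ∪ Ioc y x) := measure_mono hcover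
    _ ≤ volume (Icc a y ∩ K) + volume (Ioc y x) := measure_union_le _ _
    _ = volume (Icc a y ∩ K) + ENNReal.ofReal (x - y) := by rw [Real.volume_Ioc]

theorem lipschitzWith_one_piProj {K : Set ℝ} (hK : volume K ≠ ⊤) :
    LipschitzWith 1 (piProj K) := by
  have hfin : ∀ x, volume (Icc (sInf K) x ∩ K) ≠ ⊤ := fun x =>
    ne_top_of_le_ne_top hK (measure_mono inter_subset_right)
  refine LipschitzWith.of_le_add fun x y => ?_
  calc piProj K x
      ≤ (volume (Icc (sInf K) y ∩ K) + ENNReal.ofReal (x - y)).toReal :=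
        ENNReal.toReal_mono (by finiteness) (volume_Icc_inter_le_add K _ x y)
    _ = piProj K y + max (x - y) 0 := by
        rw [ENNReal.toReal_add (hfin y) ENNReal.ofReal_ne_top, ENNReal.toReal_ofReal']; rfl
    _ ≤ piProj K y + dist x y := by
        rw [Real.dist_eq]
        gcongr
        exact max_le (le_abs_self _) (abs_nonneg _)

theorem piProj_sInf (K : Set ℝ) : piProj K (sInf K) = 0 := by
  simp [piProj, measure_mono_null inter_subset_left Real.volume_singleton]

theorem piProj_sSup {K : Set ℝ} (hb : BddBelow K) (ha : BddAbove K) :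
    piProj K (sSup K) = (volume K).toReal := by
  rw [piProj, inter_eq_right.mpr (subset_Icc_csInf_csSup hb ha)]

theorem piProj_eq_of_forall_le {K : Set ℝ} {x y : ℝ} (hyx : y ≤ x)
    (h : ∀ k ∈ K, k ≤ x → k ≤ y) : piProj K y = piProj K x := by
  have hset : Icc (sInf K) y ∩ K = Icc (sInf K) x ∩ K := by
    refine Subset.antisymm (inter_subset_inter_left _ (Icc_subset_Icc le_rfl hyx)) ?_
    rintro k ⟨⟨hak, hkx⟩, hk⟩
    exact ⟨⟨hak, h k hk hkx⟩, hk⟩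
  rw [piProj, piProj, hset]

theorem IsCompact.exists_mem_piProj_eq {K : Set ℝ} (hK : IsCompact K) {x : ℝ}
    (hx : sInf K ≤ x) (hne : K.Nonempty) : ∃ y ∈ K, piProj K y = piProj K x := by
  have hleft : (K ∩ Iic x).Nonempty := ⟨sInf K, hK.sInf_mem hne, hx⟩
  obtain ⟨y, ⟨hyK, hyx⟩, hy⟩ := (hK.inter_right isClosed_Iic).exists_isGreatest hleft
  exact ⟨y, hyK, piProj_eq_of_forall_le hyx fun k hk hkx => hy ⟨hk, hkx⟩⟩

theorem IsCompact.surjOn_piProj {K : Set ℝ} (hK : IsCompact K) (hne : K.Nonempty) :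
    SurjOn (piProj K) K (Icc 0 (volume K).toReal) := by
  intro t ht
  have hab : sInf K ≤ sSup K := csInf_le_csSup hne hK.bddBelow hK.bddAbove
  have hivt := intermediate_value_Icc hab
    (lipschitzWith_one_piProj hK.measure_lt_top.ne).continuous.continuousOn
  rw [piProj_sInf, piProj_sSup hK.bddBelow hK.bddAbove] at hivt
  obtain ⟨x, hx, rfl⟩ := hivt ht
  exact hK.exists_mem_piProj_eq hx.1 hne

theorem stmt2 (K : Set ℝ) (hK : IsCompact K) (hpos : 0 < volume K) :
    ∀ t ∈ Set.Icc (0 : ℝ) (volume K).toReal, ∃ x ∈ K, piProj K x = t :=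
  hK.surjOn_piProj (nonempty_of_measure_ne_zero hpos.ne')
end

section
/- The selector σ_K is left-continuous on (0, λ(K)]. -/
/-!
`π_K` is monotone and 1-Lipschitz. For `0 < t ≤ λ(K)`, any `x` with `t ≤ π_K x` can be moved
down to a point of `K` at level exactly `t`: first by the intermediate value theorem, then to the
last point of `K` below it, where `π_K` has not changed. Hence `σ_K t` is the least `x` with
`t ≤ π_K x`, and such a generalized inverse of a monotone function is always left-continuous.
-/

open MeasureTheory Set Filter

/-- Left-endpoint selector `σ_K`. -/
noncomputable def sigmaSel (K : Set ℝ) (t : ℝ) : ℝ :=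
  sInf {x ∈ K | piProj K x = t}

open Topology in
theorem tendsto_nhdsLT_of_isLeast {α β : Type*} [LinearOrder α] [TopologicalSpace α]
    [OrderTopology α] [LinearOrder β] [TopologicalSpace β] [ClosedIicTopology β]
    {f : α → β} {g : β → α} (hf : Monotone f) {a b t : β}
    (hg : ∀ s ∈ Ioc a b, IsLeast {x | s ≤ f x} (g s)) (ht : t ∈ Ioc a b) :
    Tendsto g (𝓝[<] t) (𝓝 (g t)) := by
  rw [tendsto_order]
  constructor
  · intro u hu
    have hfu : f u < t := lt_of_not_ge fun h => hu.not_ge ((hg t ht).2 h)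
    filter_upwards [Ioo_mem_nhdsLT (max_lt ht.1 hfu)] with s hs
    obtain ⟨⟨has, hfus⟩, hst⟩ : (a < s ∧ f u < s) ∧ s < t :=
      ⟨max_lt_iff.1 hs.1, hs.2⟩
    by_contra! hgs
    exact ((hg s ⟨has, hst.le.trans ht.2⟩).1.trans (hf hgs)).not_gt hfus
  · intro u hu
    filter_upwards [Ioo_mem_nhdsLT ht.1] with s hs
    exact ((hg s ⟨hs.1, hs.2.le.trans ht.2⟩).2 (hs.2.le.trans (hg t ht).1)).trans_lt hu

section piProj

variable {K : Set ℝ}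

theorem piProj_mono (hK : volume K ≠ ⊤) : Monotone (piProj K) := fun _ _ hxy =>
  ENNReal.toReal_mono (measure_ne_top_of_subset inter_subset_right hK)
    (measure_mono (inter_subset_inter_left _ (Icc_subset_Icc_right hxy)))

theorem piProj_le_add_sub (hK : volume K ≠ ⊤) {x y : ℝ} (hxy : x ≤ y) :
    piProj K y ≤ piProj K x + (y - x) := by
  have hfin : volume (Icc (sInf K) x ∩ K) ≠ ⊤ :=
    measure_ne_top_of_subset inter_subset_right hK
  have hsub : Icc (sInf K) y ∩ K ⊆ (Icc (sInf K) x ∩ K) ∪ Ioc x y := by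
    rintro z ⟨⟨hz₁, hz₂⟩, hzK⟩
    rcases le_or_gt z x with hzx | hxz
    · exact Or.inl ⟨⟨hz₁, hzx⟩, hzK⟩
    · exact Or.inr ⟨hxz, hz₂⟩
  have hle :
      volume (Icc (sInf K) y ∩ K) ≤ volume (Icc (sInf K) x ∩ K) + ENNReal.ofReal (y - x) :=
    calc volume (Icc (sInf K) y ∩ K)
        ≤ volume ((Icc (sInf K) x ∩ K) ∪ Ioc x y) := measure_mono hsub
      _ ≤ volume (Icc (sInf K) x ∩ K) + volume (Ioc x y) := measure_union_le _ _
      _ = volume (Icc (sInf K) x ∩ K) + ENNReal.ofReal (y - x) := by rw [Real.volume_Ioc]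
  have := ENNReal.toReal_mono (ENNReal.add_ne_top.2 ⟨hfin, ENNReal.ofReal_ne_top⟩) hle
  rwa [ENNReal.toReal_add hfin ENNReal.ofReal_ne_top, ENNReal.toReal_ofReal (sub_nonneg.2 hxy)]
    at this

theorem lipschitzWith_piProj (hK : volume K ≠ ⊤) : LipschitzWith 1 (piProj K) := by
  refine LipschitzWith.of_le_add fun x y => ?_
  rw [Real.dist_eq]
  rcases le_total x y with hxy | hyx
  · linarith [piProj_mono hK hxy, abs_nonneg (x - y)]
  · linarith [piProj_le_add_sub hK hyx, le_abs_self (x - y)]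

theorem piProj_of_lt_sInf {x : ℝ} (hx : x < sInf K) : piProj K x = 0 := by
  simp [piProj, Icc_eq_empty_of_lt hx]

theorem piProj_sSup_s5 (hK : IsCompact K) : piProj K (sSup K) = (volume K).toReal := by
  have hsub : K ⊆ Icc (sInf K) (sSup K) := fun _ hk =>
    ⟨csInf_le hK.bddBelow hk, le_csSup hK.bddAbove hk⟩
  rw [piProj, inter_eq_right.2 hsub]

theorem exists_mem_le_piProj_eq (hK : IsClosed K) {x : ℝ} (hx : 0 < piProj K x) :
    ∃ y ∈ K, y ≤ x ∧ piProj K y = piProj K x := by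
  have hne : (K ∩ Iic x).Nonempty := by
    obtain ⟨z, ⟨-, hzx⟩, hzK⟩ := nonempty_of_measure_ne_zero
      (ENNReal.toReal_pos_iff.1 hx).1.ne'
    exact ⟨z, hzK, hzx⟩
  have hbdd : BddAbove (K ∩ Iic x) := ⟨x, fun _ hz => hz.2⟩
  obtain ⟨hyK, hyx⟩ := (hK.inter isClosed_Iic).csSup_mem hne hbdd
  refine ⟨_, hyK, hyx, ?_⟩
  have hsame : Icc (sInf K) (sSup (K ∩ Iic x)) ∩ K = Icc (sInf K) x ∩ K := by
    ext z
    constructor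
    · rintro ⟨⟨hz₁, hz₂⟩, hzK⟩
      exact ⟨⟨hz₁, hz₂.trans hyx⟩, hzK⟩
    · rintro ⟨⟨hz₁, hz₂⟩, hzK⟩
      exact ⟨⟨hz₁, le_csSup hbdd ⟨hzK, hz₂⟩⟩, hzK⟩
  rw [piProj, piProj, hsame]

theorem exists_mem_le_piProj_eq_of_le (hK : IsClosed K) (hfin : volume K ≠ ⊤) {s x : ℝ}
    (hs : 0 < s) (hsx : s ≤ piProj K x) : ∃ y ∈ K, y ≤ x ∧ piProj K y = s := by
  set a := min x (sInf K - 1)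
  have ha : piProj K a = 0 := piProj_of_lt_sInf ((min_le_right _ _).trans_lt (by linarith))
  obtain ⟨z, hz, hzs⟩ := intermediate_value_Icc (min_le_left x _)
    (lipschitzWith_piProj hfin).continuous.continuousOn
    (show s ∈ Icc (piProj K a) (piProj K x) from ⟨ha ▸ hs.le, hsx⟩)
  obtain ⟨y, hyK, hyz, hy⟩ := exists_mem_le_piProj_eq hK (hzs ▸ hs)
  exact ⟨y, hyK, hyz.trans hz.2, hy.trans hzs⟩

theorem isLeast_sigmaSel (hK : IsCompact K) {s : ℝ} (hs : 0 < s)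
    (hsK : s ≤ (volume K).toReal) : IsLeast {x | s ≤ piProj K x} (sigmaSel K s) := by
  have hfin : volume K ≠ ⊤ := hK.measure_lt_top.ne
  have hlevel : IsCompact {x ∈ K | piProj K x = s} :=
    hK.inter_right (isClosed_eq (lipschitzWith_piProj hfin).continuous continuous_const)
  obtain ⟨y, hyK, -, hy⟩ :=
    exists_mem_le_piProj_eq_of_le hK.isClosed hfin hs (hsK.trans_eq (piProj_sSup_s5 hK).symm)
  refine ⟨(hlevel.sInf_mem ⟨y, hyK, hy⟩).2.ge, fun x hx => ?_⟩
  obtain ⟨z, hzK, hzx, hz⟩ := exists_mem_le_piProj_eq_of_le hK.isClosed hfin hs hx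
  exact (csInf_le hlevel.bddBelow ⟨hzK, hz⟩).trans hzx

end piProj

theorem stmt5_general (K : Set ℝ) (hK : IsCompact K) :
    ∀ t ∈ Set.Ioc (0 : ℝ) (volume K).toReal,
      Tendsto (sigmaSel K) (nhdsWithin t (Set.Iio t)) (nhds (sigmaSel K t)) := fun _ ht =>
  tendsto_nhdsLT_of_isLeast (piProj_mono hK.measure_lt_top.ne)
    (fun _ hs => isLeast_sigmaSel hK hs.1 hs.2) ht

theorem stmt5 (K : Set ℝ) (hK : IsCompact K) (hpos : 0 < volume K) :
    ∀ t ∈ Set.Ioc (0 : ℝ) (volume K).toReal,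
      Tendsto (sigmaSel K) (nhdsWithin t (Set.Iio t)) (nhds (sigmaSel K t)) :=
  stmt5_general K hK
end

section
/- A point t ∈ [0, λ(K)] satisfies #π_K^{-1}(t) > 1 if and only if there exists a gap (ℓ, r) of K with t = π_K(ℓ) = π_K(r). -/
open MeasureTheory Set

lemma piProj_fin (K : Set ℝ) (hK : IsCompact K) (a : ℝ) :
    volume (Set.Icc (sInf K) a ∩ K) ≠ ⊤ :=
  ((measure_mono inter_subset_right).trans_lt hK.measure_lt_top).ne

lemma piProj_mono_s6 (K : Set ℝ) (hK : IsCompact K) {a b : ℝ} (hab : a ≤ b) :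
    piProj K a ≤ piProj K b := by
  apply ENNReal.toReal_mono (piProj_fin K hK b)
  exact measure_mono (inter_subset_inter_left _ (Icc_subset_Icc_right hab))

lemma piProj_key (K : Set ℝ) (hK : IsCompact K) (t x y : ℝ) (hx : x ∈ K) (hy : y ∈ K)
    (hxy : x < y) (hpx : piProj K x = t) (hpy : piProj K y = t) :
    ∃ l r, l ∈ K ∧ r ∈ K ∧ l < r ∧ Set.Ioo l r ∩ K = ∅ ∧
      piProj K l = t ∧ piProj K r = t := by
  have heq : volume (Set.Icc (sInf K) x ∩ K) = volume (Set.Icc (sInf K) y ∩ K) := by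
    have h := hpx.trans hpy.symm
    exact (ENNReal.toReal_eq_toReal_iff' (piProj_fin K hK x) (piProj_fin K hK y)).mp h
  have hB0 : volume (Set.Ioo x y ∩ K) = 0 := by
    have hdisj : Disjoint (Set.Icc (sInf K) x ∩ K) (Set.Ioo x y ∩ K) := by
      apply Set.disjoint_left.mpr
      intro w hw1 hw2
      exact absurd hw1.1.2 (not_le.mpr hw2.1.1)
    have hsub : (Set.Icc (sInf K) x ∩ K) ∪ (Set.Ioo x y ∩ K) ⊆ Set.Icc (sInf K) y ∩ K := by
      rintro w (⟨⟨h1, h2⟩, hwK⟩ | ⟨⟨h1, h2⟩, hwK⟩)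
      · exact ⟨⟨h1, h2.trans hxy.le⟩, hwK⟩
      · exact ⟨⟨csInf_le hK.bddBelow hwK, h2.le⟩, hwK⟩
    have hu := measure_union (μ := volume) hdisj (measurableSet_Ioo.inter hK.measurableSet)
    have hle : volume (Set.Icc (sInf K) x ∩ K) + volume (Set.Ioo x y ∩ K)
        ≤ volume (Set.Icc (sInf K) x ∩ K) + 0 := by
      rw [add_zero, ← hu, heq]
      exact measure_mono hsub
    have := (ENNReal.add_le_add_iff_left (piProj_fin K hK x)).mp hle
    exact le_zero_iff.mp this
  have hnsub : ¬ (Set.Ioo x y ⊆ K) := by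
    intro h
    rw [Set.inter_eq_left.mpr h, Real.volume_Ioo, ENNReal.ofReal_eq_zero] at hB0
    linarith
  obtain ⟨z, hz, hzK⟩ := Set.not_subset.mp hnsub
  set S1 := K ∩ Set.Icc x z with hS1
  set S2 := K ∩ Set.Icc z y with hS2
  have hS1ne : S1.Nonempty := ⟨x, hx, le_refl x, hz.1.le⟩
  have hS2ne : S2.Nonempty := ⟨y, hy, hz.2.le, le_refl y⟩
  have hS1bdd : BddAbove S1 := ⟨z, fun w hw => hw.2.2⟩
  have hS2bdd : BddBelow S2 := ⟨z, fun w hw => hw.2.1⟩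
  set l := sSup S1 with hldef
  set r := sInf S2 with hrdef
  have hl : l ∈ S1 := (hK.isClosed.inter isClosed_Icc).csSup_mem hS1ne hS1bdd
  have hr : r ∈ S2 := (hK.isClosed.inter isClosed_Icc).csInf_mem hS2ne hS2bdd
  have hlz : l < z := lt_of_le_of_ne hl.2.2 (fun h => hzK (h ▸ hl.1))
  have hzr : z < r := lt_of_le_of_ne (hr.2.1) (fun h => hzK (h ▸ hr.1))
  have hgap : Set.Ioo l r ∩ K = ∅ := by
    apply Set.eq_empty_iff_forall_notMem.mpr
    rintro w ⟨hw, hwK⟩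
    rcases le_or_gt w z with hwz | hwz
    · have : w ∈ S1 := ⟨hwK, (hl.2.1.trans hw.1.le), hwz⟩
      exact absurd (le_csSup hS1bdd this) (not_le.mpr hw.1)
    · have : w ∈ S2 := ⟨hwK, hwz.le, hw.2.le.trans hr.2.2⟩
      exact absurd (csInf_le hS2bdd this) (not_le.mpr hw.2)
  have hly : l ≤ y := hl.2.2.trans hz.2.le
  have hxr : x ≤ r := hz.1.le.trans hr.2.1
  have hpl : piProj K l = t := by
    have h1 := piProj_mono_s6 K hK hl.2.1
    have h2 := piProj_mono_s6 K hK hly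
    linarith
  have hpr : piProj K r = t := by
    have h1 := piProj_mono_s6 K hK hxr
    have h2 := piProj_mono_s6 K hK hr.2.2
    linarith
  exact ⟨l, r, hl.1, hr.1, hlz.trans hzr, hgap, hpl, hpr⟩

theorem stmt6 (K : Set ℝ) (hK : IsCompact K) (hpos : 0 < volume K)
    (t : ℝ) (ht : t ∈ Set.Icc (0 : ℝ) (volume K).toReal) :
    (∃ x y, x ∈ K ∧ y ∈ K ∧ x ≠ y ∧ piProj K x = t ∧ piProj K y = t) ↔
      (∃ l r, l ∈ K ∧ r ∈ K ∧ l < r ∧ Set.Ioo l r ∩ K = ∅ ∧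
        piProj K l = t ∧ piProj K r = t) := by
  constructor
  · rintro ⟨x, y, hx, hy, hne, hpx, hpy⟩
    rcases hne.lt_or_gt with h | h
    · exact piProj_key K hK t x y hx hy h hpx hpy
    · exact piProj_key K hK t y x hy hx h hpy hpx
  · rintro ⟨l, r, hl, hr, hlr, _, hpl, hpr⟩
    exact ⟨l, r, hl, hr, hlr.ne, hpl, hpr⟩
end

section
/- For any two compact sets K, M ⊆ ℝ of positive Lebesgue measure, the normed spaces (L^∞(K), ‖·‖_A) and (L^∞(M), ‖·‖_A) are linearly isometric, where ‖f‖_A is the Alexiewicz norm (the sup norm of the primitive). -/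
/-!
The distribution function `F_K x = λ(K ∩ (-∞, x])` of a compact set `K` is continuous, and its
generalized inverse `Q_K` pushes Lebesgue measure on `[0, λ(K)]` forward to `λ|_K`, with
`F_K ∘ Q_K = id` on `[0, λ(K)]` and `Q_K ∘ F_K = id` a.e. on `K`. Changing variables gives
`J_K f = (∫₀^· f ∘ Q_K) ∘ F_K`, so `‖f‖_A` is the sup over `[0, λ(K)]` of `|∫₀^· f ∘ Q_K|`.
With `r = λ(K) / λ(M)` the map `f ↦ r · f ∘ Q_K ∘ (r ·) ∘ F_M` therefore preserves the
Alexiewicz norm, and the same construction with `K` and `M` exchanged inverts it a.e.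
-/

open MeasureTheory Set

/-- Primitive `J_K f`. -/
noncomputable def JPrim (K : Set ℝ) (f : ℝ → ℝ) (x : ℝ) : ℝ :=
  ∫ y in Set.Icc (sInf K) x ∩ K, f y

/-- The Alexiewicz norm of `f` on `K`: sup norm of the primitive. -/
noncomputable def normA (K : Set ℝ) (f : ℝ → ℝ) : ℝ :=
  ⨆ x ∈ K, |JPrim K f x|

/-- Membership in `L^∞(K)`. -/
def MemLinf (K : Set ℝ) (f : ℝ → ℝ) : Prop :=
  Measurable f ∧ MeasureTheory.MemLp f ⊤ (volume.restrict K)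

noncomputable def distribFun (K : Set ℝ) (x : ℝ) : ℝ := (volume (K ∩ Iic x)).toReal

/-- A generalized inverse of `distribFun K` on `[0, λ(K)]`; the `min` makes it take values in `K`
for every `t`. -/
noncomputable def quantile (K : Set ℝ) (t : ℝ) : ℝ :=
  sInf {y ∈ K | min t (volume K).toReal ≤ distribFun K y}

section distribFun

variable {K : Set ℝ}

lemma distribFun_nonneg (K : Set ℝ) (x : ℝ) : 0 ≤ distribFun K x := ENNReal.toReal_nonneg

lemma volume_inter_Iic (hK : volume K ≠ ⊤) (x : ℝ) :
    volume (K ∩ Iic x) = ENNReal.ofReal (distribFun K x) :=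
  (ENNReal.ofReal_toReal (measure_inter_ne_top_of_left_ne_top hK)).symm

lemma distribFun_mono (hK : volume K ≠ ⊤) : Monotone (distribFun K) := fun _ _ h =>
  ENNReal.toReal_mono (measure_inter_ne_top_of_left_ne_top hK)
    (measure_mono (inter_subset_inter_right _ (Iic_subset_Iic.2 h)))

lemma distribFun_le_volume (hK : volume K ≠ ⊤) (x : ℝ) : distribFun K x ≤ (volume K).toReal :=
  ENNReal.toReal_mono hK (measure_mono inter_subset_left)

lemma lipschitzWith_distribFun (hK : volume K ≠ ⊤) : LipschitzWith 1 (distribFun K) := by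
  refine LipschitzWith.of_le_add fun x y => ?_
  rcases le_total x y with hxy | hyx
  · exact (distribFun_mono hK hxy).trans (le_add_of_nonneg_right dist_nonneg)
  have hsplit : K ∩ Iic x ⊆ (K ∩ Iic y) ∪ Ioc y x := fun z ⟨hzK, hzx⟩ =>
    (le_or_gt z y).imp (fun h => ⟨hzK, h⟩) fun h => ⟨h, hzx⟩
  calc distribFun K x ≤ (volume (K ∩ Iic y) + volume (Ioc y x)).toReal :=
        ENNReal.toReal_mono
          (ENNReal.add_ne_top.2 ⟨measure_inter_ne_top_of_left_ne_top hK, by simp⟩)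
          ((measure_mono hsplit).trans (measure_union_le _ _))
    _ = distribFun K y + dist x y := by
        rw [ENNReal.toReal_add (measure_inter_ne_top_of_left_ne_top hK) (by simp),
          Real.volume_Ioc, ENNReal.toReal_ofReal (sub_nonneg.2 hyx), Real.dist_eq,
          abs_of_nonneg (sub_nonneg.2 hyx)]
        rfl

lemma continuous_distribFun (hK : volume K ≠ ⊤) : Continuous (distribFun K) :=
  (lipschitzWith_distribFun hK).continuous

lemma distribFun_csInf (hK : BddBelow K) : distribFun K (sInf K) = 0 := by
  have : K ∩ Iic (sInf K) ⊆ {sInf K} := fun y ⟨hyK, hy⟩ =>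
    le_antisymm hy (csInf_le hK hyK)
  rw [distribFun, measure_mono_null this Real.volume_singleton, ENNReal.toReal_zero]

lemma distribFun_csSup (hK : BddAbove K) : distribFun K (sSup K) = (volume K).toReal := by
  rw [distribFun, inter_eq_left.2 fun _ hy => mem_Iic.2 (le_csSup hK hy)]

end distribFun

section quantile

variable {K : Set ℝ}

lemma quantile_le (hK : IsCompact K) {t y : ℝ} (hy : y ∈ K)
    (h : min t (volume K).toReal ≤ distribFun K y) : quantile K t ≤ y :=
  csInf_le (hK.bddBelow.mono (sep_subset _ _)) ⟨hy, h⟩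

lemma quantile_mem_setOf (hK : IsCompact K) (hne : K.Nonempty) (t : ℝ) :
    quantile K t ∈ {y ∈ K | min t (volume K).toReal ≤ distribFun K y} := by
  refine IsClosed.csInf_mem ?_ ⟨sSup K, hK.sSup_mem hne, ?_⟩ (hK.bddBelow.mono (sep_subset _ _))
  · exact hK.isClosed.inter
      (isClosed_Ici.preimage (continuous_distribFun hK.measure_lt_top.ne))
  · rw [distribFun_csSup hK.bddAbove]
    exact min_le_right _ _

lemma quantile_mem (hK : IsCompact K) (hne : K.Nonempty) (t : ℝ) : quantile K t ∈ K :=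
  (quantile_mem_setOf hK hne t).1

lemma quantile_mono (hK : IsCompact K) (hne : K.Nonempty) : Monotone (quantile K) :=
  fun _ t' h => quantile_le hK (quantile_mem hK hne t')
    ((min_le_min_right _ h).trans (quantile_mem_setOf hK hne t').2)

lemma measurable_quantile (hK : IsCompact K) (hne : K.Nonempty) : Measurable (quantile K) :=
  (quantile_mono hK hne).measurable

lemma distribFun_quantile (hK : IsCompact K) (hne : K.Nonempty) {t : ℝ} (ht₀ : 0 ≤ t)
    (ht : t ≤ (volume K).toReal) : distribFun K (quantile K t) = t := by
  have hF := continuous_distribFun hK.measure_lt_top.ne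
  have hFmono := distribFun_mono hK.measure_lt_top.ne
  have hge : t ≤ distribFun K (quantile K t) := by
    simpa [min_eq_left ht] using (quantile_mem_setOf hK hne t).2
  obtain ⟨z, ⟨-, hzq⟩, hzt⟩ : ∃ z ∈ Icc (sInf K) (quantile K t), distribFun K z = t :=
    intermediate_value_Icc (csInf_le hK.bddBelow (quantile_mem hK hne t)) hF.continuousOn
      ⟨(distribFun_csInf hK.bddBelow).symm ▸ ht₀, hge⟩
  -- no point of `K` lies strictly between `z` and `quantile K t`, by minimality of the latter
  have hgap : K ∩ Iic (quantile K t) ⊆ (K ∩ Iic z) ∪ {quantile K t} := by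
    rintro w ⟨hwK, hwq⟩
    rcases le_or_gt w z with hwz | hzw
    · exact Or.inl ⟨hwK, hwz⟩
    · refine Or.inr (le_antisymm hwq (quantile_le hK hwK ?_))
      rw [min_eq_left ht, ← hzt]
      exact hFmono hzw.le
  have hle : volume (K ∩ Iic (quantile K t)) ≤ volume (K ∩ Iic z) :=
    calc volume (K ∩ Iic (quantile K t))
        ≤ volume (K ∩ Iic z) + volume {quantile K t} :=
          (measure_mono hgap).trans (measure_union_le _ _)
      _ = volume (K ∩ Iic z) := by rw [Real.volume_singleton, add_zero]
  refine le_antisymm ?_ hge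
  calc distribFun K (quantile K t) ≤ distribFun K z :=
        ENNReal.toReal_mono (measure_inter_ne_top_of_left_ne_top hK.measure_lt_top.ne) hle
    _ = t := hzt

end quantile

section pushforward

variable {K : Set ℝ}

lemma inter_preimage_quantile_Iic_ae_eq (hK : IsCompact K) (hne : K.Nonempty) (x : ℝ) :
    (Icc 0 (volume K).toReal ∩ quantile K ⁻¹' Iic x : Set ℝ) =ᵐ[volume]
      Icc 0 (distribFun K x) := by
  have hFmono := distribFun_mono hK.measure_lt_top.ne
  have hsub : Icc 0 (volume K).toReal ∩ quantile K ⁻¹' Iic x ⊆ Icc 0 (distribFun K x) :=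
    fun t ⟨⟨ht₀, ht⟩, hq⟩ => ⟨ht₀, distribFun_quantile hK hne ht₀ ht ▸ hFmono hq⟩
  have hsup : Ico 0 (distribFun K x) ⊆ Icc 0 (volume K).toReal ∩ quantile K ⁻¹' Iic x := by
    rintro t ⟨ht₀, htx⟩
    have ht : t ≤ (volume K).toReal := htx.le.trans (distribFun_le_volume hK.measure_lt_top.ne x)
    refine ⟨⟨ht₀, ht⟩, (le_of_not_gt fun hxq => htx.not_ge ?_ : quantile K t ≤ x)⟩
    exact distribFun_quantile hK hne ht₀ ht ▸ hFmono hxq.le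
  exact hsub.eventuallyLE.antisymm (Ico_ae_eq_Icc.symm.le.trans hsup.eventuallyLE)

lemma map_quantile (hK : IsCompact K) (hne : K.Nonempty) :
    Measure.map (quantile K) (volume.restrict (Icc 0 (volume K).toReal)) = volume.restrict K := by
  have hQ := measurable_quantile hK hne
  have : IsFiniteMeasure (volume.restrict (Icc (0 : ℝ) (volume K).toReal)) :=
    isFiniteMeasure_restrict.2 (by simp)
  refine Measure.ext_of_Iic _ _ fun x => ?_
  rw [Measure.map_apply hQ measurableSet_Iic, Measure.restrict_apply (hQ measurableSet_Iic),
    Measure.restrict_apply measurableSet_Iic, inter_comm, inter_comm (Iic x),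
    measure_congr (inter_preimage_quantile_Iic_ae_eq hK hne x), Real.volume_Icc, sub_zero,
    volume_inter_Iic hK.measure_lt_top.ne]

lemma map_distribFun (hK : IsCompact K) (hne : K.Nonempty) :
    Measure.map (distribFun K) (volume.restrict K) =
      volume.restrict (Icc 0 (volume K).toReal) := by
  rw [← map_quantile hK hne, Measure.map_map
    (continuous_distribFun hK.measure_lt_top.ne).measurable (measurable_quantile hK hne)]
  conv_rhs => rw [← Measure.map_id (μ := volume.restrict (Icc 0 (volume K).toReal))]
  exact Measure.map_congr (ae_restrict_of_forall_mem measurableSet_Icc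
    fun t ht => distribFun_quantile hK hne ht.1 ht.2)

lemma ae_quantile_distribFun (hK : IsCompact K) (hne : K.Nonempty) :
    ∀ᵐ y ∂(volume.restrict K), quantile K (distribFun K y) = y := by
  have hQ := measurable_quantile hK hne
  rw [← map_quantile hK hne]
  refine (ae_map_iff hQ.aemeasurable (measurableSet_eq_fun
    (hQ.comp (continuous_distribFun hK.measure_lt_top.ne).measurable) measurable_id)).2 ?_
  exact ae_restrict_of_forall_mem measurableSet_Icc
    fun t ht => congrArg (quantile K) (distribFun_quantile hK hne ht.1 ht.2)

lemma image_distribFun (hK : IsCompact K) (hne : K.Nonempty) :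
    distribFun K '' K = Icc 0 (volume K).toReal :=
  Subset.antisymm
    (image_subset_iff.2 fun x _ =>
      ⟨distribFun_nonneg K x, distribFun_le_volume hK.measure_lt_top.ne x⟩)
    fun t ht => ⟨quantile K t, quantile_mem hK hne t, distribFun_quantile hK hne ht.1 ht.2⟩

end pushforward

section primitive

variable {K : Set ℝ} {f : ℝ → ℝ}

lemma Icc_csInf_inter (hK : BddBelow K) (x : ℝ) : Icc (sInf K) x ∩ K = Iic x ∩ K := by
  ext y
  exact ⟨fun ⟨⟨_, hyx⟩, hy⟩ => ⟨hyx, hy⟩, fun ⟨hyx, hy⟩ => ⟨⟨csInf_le hK hy, hyx⟩, hy⟩⟩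

lemma JPrim_eq_setIntegral_quantile (hK : IsCompact K) (hne : K.Nonempty)
    (hf : AEStronglyMeasurable f (volume.restrict K)) (x : ℝ) :
    JPrim K f x = ∫ t in Icc 0 (distribFun K x), f (quantile K t) := by
  have hQ := measurable_quantile hK hne
  rw [← map_quantile hK hne] at hf
  rw [JPrim, Icc_csInf_inter hK.bddBelow, ← Measure.restrict_restrict measurableSet_Iic,
    ← map_quantile hK hne, setIntegral_map measurableSet_Iic hf hQ.aemeasurable,
    Measure.restrict_restrict (hQ measurableSet_Iic), inter_comm]
  exact setIntegral_congr_set (inter_preimage_quantile_Iic_ae_eq hK hne x)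

lemma JPrim_quantile_distribFun (hK : IsCompact K) (hne : K.Nonempty)
    (hf : AEStronglyMeasurable f (volume.restrict K)) (x : ℝ) :
    JPrim K f (quantile K (distribFun K x)) = JPrim K f x := by
  rw [JPrim_eq_setIntegral_quantile hK hne hf, JPrim_eq_setIntegral_quantile hK hne hf,
    distribFun_quantile hK hne (distribFun_nonneg K x)
      (distribFun_le_volume hK.measure_lt_top.ne x)]

lemma abs_JPrim_le (hf : IntegrableOn f K) (x : ℝ) : |JPrim K f x| ≤ ∫ y in K, |f y| :=
  calc |JPrim K f x| ≤ ∫ y in Icc (sInf K) x ∩ K, |f y| := abs_integral_le_integral_abs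
    _ ≤ ∫ y in K, |f y| := setIntegral_mono_set hf.abs (ae_of_all _ fun _ => abs_nonneg _)
        inter_subset_right.eventuallyLE

end primitive

lemma setIntegral_Icc_zero_mul {r b : ℝ} (hr : 0 ≤ r) (hb : 0 ≤ b) (h : ℝ → ℝ) :
    ∫ u in Icc 0 (r * b), h u = r * ∫ t in Icc 0 b, h (r * t) := by
  have := intervalIntegral.smul_integral_comp_mul_left (a := 0) (b := b) h r
  rw [mul_zero, smul_eq_mul] at this
  rw [integral_Icc_eq_integral_Ioc, integral_Icc_eq_integral_Ioc,
    ← intervalIntegral.integral_of_le (mul_nonneg hr hb), ← intervalIntegral.integral_of_le hb,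
    this]

lemma map_mul_left_restrict_Icc {r : ℝ} (hr : 0 < r) (b : ℝ) :
    Measure.map (r * ·) (volume.restrict (Icc 0 b)) =
      ENNReal.ofReal r⁻¹ • volume.restrict (Icc 0 (r * b)) := by
  have hpre : (r * ·) ⁻¹' Icc 0 (r * b) = Icc 0 b := by
    rw [preimage_const_mul_Icc₀ 0 (r * b) hr, zero_div, mul_div_cancel_left₀ _ hr.ne']
  rw [← hpre, ← Measure.restrict_map (measurable_const_mul r) measurableSet_Icc,
    Real.map_volume_mul_left hr.ne', abs_of_pos (inv_pos.2 hr), Measure.restrict_smul]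

lemma biSup_image_of_bddAbove {α β : Type*} {s : Set α} {φ : α → β} {g : β → ℝ}
    (hg₀ : ∀ b, 0 ≤ g b) (hg : BddAbove (range g)) :
    ⨆ b ∈ φ '' s, g b = ⨆ a ∈ s, g (φ a) :=
  ciSup_image (hg.mono (range_subset_iff.2 fun _ => mem_range_self _))
    (Real.sSup_empty ▸ Real.iSup_nonneg fun _ => hg₀ _)

lemma toReal_volume_pos {K : Set ℝ} (hK : IsCompact K) (hKpos : 0 < volume K) :
    0 < (volume K).toReal :=
  ENNReal.toReal_pos hKpos.ne' hK.measure_lt_top.ne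

noncomputable def volRatio (K M : Set ℝ) : ℝ := (volume K).toReal / (volume M).toReal

noncomputable def transportMap (K M : Set ℝ) (y : ℝ) : ℝ :=
  quantile K (volRatio K M * distribFun M y)

noncomputable def transport (K M : Set ℝ) : (ℝ → ℝ) →ₗ[ℝ] (ℝ → ℝ) :=
  volRatio K M • LinearMap.funLeft ℝ ℝ (transportMap K M)

section transport

variable {K M : Set ℝ} {f : ℝ → ℝ}

lemma transport_apply (f : ℝ → ℝ) (y : ℝ) :
    transport K M f y = volRatio K M * f (transportMap K M y) := rfl

lemma volRatio_nonneg (K M : Set ℝ) : 0 ≤ volRatio K M :=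
  div_nonneg ENNReal.toReal_nonneg ENNReal.toReal_nonneg

lemma volRatio_pos (hK : IsCompact K) (hM : IsCompact M) (hKpos : 0 < volume K)
    (hMpos : 0 < volume M) : 0 < volRatio K M :=
  div_pos (toReal_volume_pos hK hKpos) (toReal_volume_pos hM hMpos)

lemma volRatio_mul_toReal_volume (hM : IsCompact M) (hMpos : 0 < volume M) :
    volRatio K M * (volume M).toReal = (volume K).toReal :=
  div_mul_cancel₀ _ (toReal_volume_pos hM hMpos).ne'

lemma volRatio_mul_volRatio (hK : IsCompact K) (hM : IsCompact M) (hKpos : 0 < volume K)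
    (hMpos : 0 < volume M) : volRatio K M * volRatio M K = 1 := by
  have := toReal_volume_pos hK hKpos
  have := toReal_volume_pos hM hMpos
  unfold volRatio
  field_simp

lemma volRatio_mul_distribFun_mem (hM : IsCompact M) (hMpos : 0 < volume M) (y : ℝ) :
    volRatio K M * distribFun M y ∈ Icc 0 (volume K).toReal :=
  ⟨mul_nonneg (volRatio_nonneg K M) (distribFun_nonneg M y),
    volRatio_mul_toReal_volume (K := K) hM hMpos ▸ mul_le_mul_of_nonneg_left
      (distribFun_le_volume hM.measure_lt_top.ne y) (volRatio_nonneg K M)⟩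

lemma measurable_transportMap (hK : IsCompact K) (hKpos : 0 < volume K) (hM : IsCompact M) :
    Measurable (transportMap K M) :=
  (measurable_quantile hK (nonempty_of_measure_ne_zero hKpos.ne')).comp
    ((continuous_distribFun hM.measure_lt_top.ne).measurable.const_mul _)

lemma map_transportMap (hK : IsCompact K) (hM : IsCompact M) (hKpos : 0 < volume K)
    (hMpos : 0 < volume M) :
    Measure.map (transportMap K M) (volume.restrict M) =
      ENNReal.ofReal (volRatio K M)⁻¹ • volume.restrict K := by
  have hF := (continuous_distribFun hM.measure_lt_top.ne).measurable
  have hQ := measurable_quantile hK (nonempty_of_measure_ne_zero hKpos.ne')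
  have hmul := measurable_const_mul (volRatio K M)
  rw [show transportMap K M = quantile K ∘ (volRatio K M * ·) ∘ distribFun M from rfl,
    ← Measure.map_map hQ (hmul.comp hF), ← Measure.map_map hmul hF,
    map_distribFun hM (nonempty_of_measure_ne_zero hMpos.ne'),
    map_mul_left_restrict_Icc (volRatio_pos hK hM hKpos hMpos),
    volRatio_mul_toReal_volume hM hMpos, Measure.map_smul,
    map_quantile hK (nonempty_of_measure_ne_zero hKpos.ne')]

lemma memLinf_transport (hK : IsCompact K) (hM : IsCompact M) (hKpos : 0 < volume K)
    (hMpos : 0 < volume M) (hf : MemLinf K f) : MemLinf M (transport K M f) := by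
  have hφ := measurable_transportMap hK hKpos hM
  have hfφ : MemLp f ⊤ (Measure.map (transportMap K M) (volume.restrict M)) := by
    rw [map_transportMap hK hM hKpos hMpos]
    exact hf.2.smul_measure ENNReal.ofReal_ne_top
  exact ⟨(hf.1.comp hφ).const_mul _, (hfφ.comp_of_map hφ.aemeasurable).const_mul _⟩

lemma aestronglyMeasurable_transport (hK : IsCompact K) (hM : IsCompact M)
    (hKpos : 0 < volume K) (hMpos : 0 < volume M)
    (hf : AEStronglyMeasurable f (volume.restrict K)) :
    AEStronglyMeasurable (transport K M f) (volume.restrict M) := by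
  have hφ := measurable_transportMap hK hKpos hM
  have hfφ : AEStronglyMeasurable f (Measure.map (transportMap K M) (volume.restrict M)) := by
    rw [map_transportMap hK hM hKpos hMpos]
    exact hf.smul_measure _
  exact (hfφ.comp_aemeasurable hφ.aemeasurable).const_mul _

lemma JPrim_transport (hK : IsCompact K) (hM : IsCompact M) (hKpos : 0 < volume K)
    (hMpos : 0 < volume M) (hf : AEStronglyMeasurable f (volume.restrict K)) (y : ℝ) :
    JPrim M (transport K M f) y = JPrim K f (transportMap K M y) := by
  have hKne := nonempty_of_measure_ne_zero hKpos.ne'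
  have hMne := nonempty_of_measure_ne_zero hMpos.ne'
  have hmem := volRatio_mul_distribFun_mem (K := K) hM hMpos y
  rw [JPrim_eq_setIntegral_quantile hM hMne (aestronglyMeasurable_transport hK hM hKpos hMpos hf),
    transportMap, JPrim_eq_setIntegral_quantile hK hKne hf,
    distribFun_quantile hK hKne hmem.1 hmem.2,
    setIntegral_Icc_zero_mul (volRatio_nonneg K M) (distribFun_nonneg M y), ← integral_const_mul]
  refine setIntegral_congr_fun measurableSet_Icc fun u hu => ?_
  rw [transport_apply, transportMap, distribFun_quantile hM hMne hu.1
    (hu.2.trans (distribFun_le_volume hM.measure_lt_top.ne y))]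

lemma image_transportMap (hM : IsCompact M) (hMpos : 0 < volume M) :
    transportMap K M '' M = quantile K '' Icc 0 (volume K).toReal := by
  rw [show transportMap K M = quantile K ∘ (volRatio K M * ·) ∘ distribFun M from rfl,
    image_comp, image_comp, image_distribFun hM (nonempty_of_measure_ne_zero hMpos.ne'),
    image_mul_left_Icc (volRatio_nonneg K M) ENNReal.toReal_nonneg, mul_zero,
    volRatio_mul_toReal_volume hM hMpos]

lemma normA_transport (hK : IsCompact K) (hM : IsCompact M) (hKpos : 0 < volume K)
    (hMpos : 0 < volume M) (hf : IntegrableOn f K) :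
    normA M (transport K M f) = normA K f := by
  have hKne := nonempty_of_measure_ne_zero hKpos.ne'
  have hJ : BddAbove (range fun x => |JPrim K f x|) :=
    ⟨_, forall_mem_range.2 (abs_JPrim_le hf)⟩
  calc normA M (transport K M f) = ⨆ y ∈ M, |JPrim K f (transportMap K M y)| := by
        simp_rw [normA, JPrim_transport hK hM hKpos hMpos hf.aestronglyMeasurable]
    _ = ⨆ t ∈ transportMap K M '' M, |JPrim K f t| :=
        (biSup_image_of_bddAbove (fun _ => abs_nonneg _) hJ).symm
    _ = ⨆ t ∈ (quantile K ∘ distribFun K) '' K, |JPrim K f t| := by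
        rw [image_transportMap hM hMpos, image_comp, image_distribFun hK hKne]
    _ = ⨆ x ∈ K, |JPrim K f (quantile K (distribFun K x))| :=
        biSup_image_of_bddAbove (fun _ => abs_nonneg _) hJ
    _ = normA K f := by
        simp_rw [JPrim_quantile_distribFun hK hKne hf.aestronglyMeasurable]
        rfl

lemma transport_transport_ae (hK : IsCompact K) (hM : IsCompact M) (hKpos : 0 < volume K)
    (hMpos : 0 < volume M) (g : ℝ → ℝ) :
    ∀ᵐ y ∂(volume.restrict M), transport K M (transport M K g) y = g y := by
  filter_upwards [ae_quantile_distribFun hM (nonempty_of_measure_ne_zero hMpos.ne')] with y hy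
  have hmem := volRatio_mul_distribFun_mem (K := K) hM hMpos y
  rw [transport_apply, transport_apply, transportMap, transportMap,
    distribFun_quantile hK (nonempty_of_measure_ne_zero hKpos.ne') hmem.1 hmem.2,
    ← mul_assoc (volRatio M K), volRatio_mul_volRatio hM hK hMpos hKpos, one_mul, hy, ← mul_assoc,
    volRatio_mul_volRatio hK hM hKpos hMpos, one_mul]

end transport

theorem stmt15 (K M : Set ℝ) (hK : IsCompact K) (hM : IsCompact M)
    (hKpos : 0 < volume K) (hMpos : 0 < volume M) :
    ∃ T : (ℝ → ℝ) → (ℝ → ℝ),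
      -- T maps L^∞(K) into L^∞(M)
      (∀ f, MemLinf K f → MemLinf M (T f)) ∧
      -- linearity
      (∀ f g, MemLinf K f → MemLinf K g →
        (∀ᵐ y ∂(volume.restrict M), T (f + g) y = T f y + T g y) ∧
        ∀ c : ℝ, ∀ᵐ y ∂(volume.restrict M), T (c • f) y = c * T f y) ∧
      -- isometry for the Alexiewicz norms
      (∀ f, MemLinf K f → normA M (T f) = normA K f) ∧
      -- surjectivity onto L^∞(M) (up to a.e. equality)
      (∀ g, MemLinf M g → ∃ f, MemLinf K f ∧ T f =ᵐ[volume.restrict M] g) := by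
  have : IsFiniteMeasure (volume.restrict K) := isFiniteMeasure_restrict.2 hK.measure_lt_top.ne
  refine ⟨transport K M, fun _ => memLinf_transport hK hM hKpos hMpos, fun f g _ _ => ?_,
    fun _ hf => normA_transport hK hM hKpos hMpos (hf.2.integrable le_top),
    fun g hg => ⟨transport M K g, memLinf_transport hM hK hMpos hKpos hg,
      transport_transport_ae hK hM hKpos hMpos g⟩⟩
  rw [map_add]
  exact ⟨.of_forall fun _ => rfl, fun c => .of_forall fun _ => by rw [map_smul]; rfl⟩
end

section
/- If φ : M → K is a strictly increasing bijection and π_K ∘ φ = ψ ∘ π_M for an increasing homeomorphism ψ : [0, λ(M)] → [0, λ(K)], then ψ(E_M) = E_K, and for every s ∈ E_M the restriction of φ to the fiber π_M^{-1}(s) is an increasing bijection onto π_K^{-1}(ψ(s)). -/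
open MeasureTheory Set

/-- The exceptional set `E_K` of values with multi-point fibers. -/
def ESet (K : Set ℝ) : Set ℝ :=
  {t | ∃ x y, x ∈ K ∧ y ∈ K ∧ x ≠ y ∧ piProj K x = t ∧ piProj K y = t}

lemma piProj_mem_Icc (M : Set ℝ) (hfin : volume M ≠ ⊤) (y : ℝ) :
    piProj M y ∈ Set.Icc (0 : ℝ) (volume M).toReal := by
  refine ⟨ENNReal.toReal_nonneg, ?_⟩
  exact ENNReal.toReal_mono hfin (measure_mono Set.inter_subset_right)

theorem stmt17 (K M : Set ℝ) (hK : IsCompact K) (hM : IsCompact M)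
    (hKpos : 0 < volume K) (hMpos : 0 < volume M)
    (φ ψ : ℝ → ℝ)
    (hφmono : StrictMonoOn φ M) (hφbij : Set.BijOn φ M K)
    (hψmono : StrictMonoOn ψ (Set.Icc (0 : ℝ) (volume M).toReal))
    (hψcont : ContinuousOn ψ (Set.Icc (0 : ℝ) (volume M).toReal))
    (hψbij : Set.BijOn ψ (Set.Icc (0 : ℝ) (volume M).toReal)
      (Set.Icc (0 : ℝ) (volume K).toReal))
    (hcomm : ∀ y ∈ M, piProj K (φ y) = ψ (piProj M y)) :
    ψ '' ESet M = ESet K ∧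
    ∀ s ∈ ESet M,
      Set.BijOn φ {y ∈ M | piProj M y = s} {x ∈ K | piProj K x = ψ s} := by
  have hMfin : volume M ≠ ⊤ := hM.measure_lt_top.ne
  have hmem : ∀ y : ℝ, piProj M y ∈ Set.Icc (0 : ℝ) (volume M).toReal :=
    piProj_mem_Icc M hMfin
  have hψinj := hψbij.injOn
  constructor
  · ext t
    constructor
    · rintro ⟨s, ⟨y1, y2, hy1, hy2, hne, h1, h2⟩, rfl⟩
      exact ⟨φ y1, φ y2, hφbij.mapsTo hy1, hφbij.mapsTo hy2,
        fun h => hne (hφbij.injOn hy1 hy2 h),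
        by rw [hcomm y1 hy1, h1], by rw [hcomm y2 hy2, h2]⟩
    · rintro ⟨x1, x2, hx1, hx2, hne, h1, h2⟩
      obtain ⟨y1, hy1, rfl⟩ := hφbij.surjOn hx1
      obtain ⟨y2, hy2, rfl⟩ := hφbij.surjOn hx2
      have e1 : ψ (piProj M y1) = t := by rw [← hcomm y1 hy1]; exact h1
      have e2 : ψ (piProj M y2) = t := by rw [← hcomm y2 hy2]; exact h2
      have heq : piProj M y1 = piProj M y2 :=
        hψinj (hmem y1) (hmem y2) (e1.trans e2.symm)
      exact ⟨piProj M y1, ⟨y1, y2, hy1, hy2, fun h => hne (by rw [h]),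
        rfl, heq.symm⟩, e1⟩
  · intro s hs
    have hsmem : s ∈ Set.Icc (0 : ℝ) (volume M).toReal := by
      obtain ⟨y1, _, hy1, _, _, h1, _⟩ := hs
      rw [← h1]; exact hmem y1
    refine ⟨?_, ?_, ?_⟩
    · rintro y ⟨hy, hpy⟩
      exact ⟨hφbij.mapsTo hy, by rw [hcomm y hy, hpy]⟩
    · intro y1 hy1 y2 hy2 h
      exact hφbij.injOn hy1.1 hy2.1 h
    · rintro x ⟨hx, hpx⟩
      obtain ⟨y, hy, rfl⟩ := hφbij.surjOn hx
      refine ⟨y, ⟨hy, ?_⟩, rfl⟩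
      exact hψinj (hmem y) hsmem (by rw [← hcomm y hy]; exact hpx)
end

section
/- Let φ : M → K be a strictly increasing homeomorphism with π_K ∘ φ = ψ ∘ π_M for an increasing homeomorphism ψ : [0, λ(M)] → [0, λ(K)] satisfying ψ(E_M) = E_K. Then φ coincides with the selector map φ_σ = σ_K ∘ ψ ∘ π_M outside the set ⋃_{s ∈ E_M} (π_M^{-1}(s) \ {min π_M^{-1}(s)}), which has Lebesgue measure zero; in particular φ = φ_σ a.e. on M. -/
open MeasureTheory Set

/-!
Since `π_M` is monotone and 1-Lipschitz, each fibre `π_M⁻¹(s)` is a compact set `[a, b] ∩ M`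
with `λ((a, b] ∩ M) = π_M(b) - π_M(a) = 0`, so removing its minimum leaves a null set; a
nontrivial fibre contains a rational, so `E_M` is countable and `N` is null. Off `N`, a point
`y` is the minimum of its fibre; by injectivity of `ψ`, `π_K ∘ φ = ψ ∘ π_M` identifies the
`π_K`-fibre of `φ y` with the `φ`-image of the `π_M`-fibre of `y`, and as `φ` is increasing its
minimum is `φ y`.
-/

namespace piProj

variable {M : Set ℝ}

lemma eq_measureReal_Iic_inter (hM : BddBelow M) (x : ℝ) :
    piProj M x = volume.real (Iic x ∩ M) := by
  have : Icc (sInf M) x ∩ M = Iic x ∩ M := by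
    ext z
    exact ⟨fun ⟨hz, hzM⟩ => ⟨hz.2, hzM⟩, fun ⟨hz, hzM⟩ => ⟨⟨csInf_le hM hzM, hz⟩, hzM⟩⟩
  rw [piProj, this, measureReal_def]

lemma nonneg (x : ℝ) : 0 ≤ piProj M x := ENNReal.toReal_nonneg

lemma le_measureReal (hfin : volume M ≠ ⊤) (x : ℝ) : piProj M x ≤ volume.real M :=
  ENNReal.toReal_mono hfin (measure_mono inter_subset_right)

lemma monotone (hfin : volume M ≠ ⊤) : Monotone (piProj M) := fun _ _ hxy =>
  ENNReal.toReal_mono (measure_ne_top_of_subset inter_subset_right hfin)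
    (measure_mono (inter_subset_inter_left _ (Icc_subset_Icc_right hxy)))

lemma add_measureReal_Ioc_inter (hM : BddBelow M) (hMm : MeasurableSet M)
    (hfin : volume M ≠ ⊤) {x y : ℝ} (hxy : x ≤ y) :
    piProj M x + volume.real (Ioc x y ∩ M) = piProj M y := by
  rw [eq_measureReal_Iic_inter hM, eq_measureReal_Iic_inter hM, ← Iic_union_Ioc_eq_Iic hxy,
    union_inter_distrib_right, measureReal_union _ (measurableSet_Ioc.inter hMm)
      (measure_ne_top_of_subset inter_subset_right hfin)
      (measure_ne_top_of_subset inter_subset_right hfin)]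
  exact (Iic_disjoint_Ioc le_rfl).mono inter_subset_left inter_subset_left

lemma lipschitzWith_one (hM : BddBelow M) (hMm : MeasurableSet M) (hfin : volume M ≠ ⊤) :
    LipschitzWith 1 (piProj M) := by
  refine LipschitzWith.of_le_add fun x y => ?_
  rcases le_total x y with hxy | hyx
  · linarith [monotone hfin hxy, dist_nonneg (x := x) (y := y)]
  · have hIoc : volume.real (Ioc y x ∩ M) ≤ x - y :=
      (measureReal_mono inter_subset_left measure_Ioc_lt_top.ne).trans_eq (by simp [hyx])
    rw [← add_measureReal_Ioc_inter hM hMm hfin hyx, Real.dist_eq, abs_of_nonneg (by linarith)]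
    linarith

lemma isCompact_fiber (hM : IsCompact M) (s : ℝ) : IsCompact {y ∈ M | piProj M y = s} :=
  hM.inter_right <| isClosed_singleton.preimage
    (lipschitzWith_one hM.bddBelow hM.measurableSet hM.measure_lt_top.ne).continuous

lemma volume_fiber_diff_sInf (hM : IsCompact M) (s : ℝ) :
    volume ({y ∈ M | piProj M y = s} \ {sInf {y ∈ M | piProj M y = s}}) = 0 := by
  set F := {y ∈ M | piProj M y = s}
  rcases F.eq_empty_or_nonempty with hF | hF
  · simp [hF]
  have hFc := isCompact_fiber hM s
  obtain ⟨⟨-, ha⟩, ⟨-, hb⟩⟩ := And.intro (hFc.sInf_mem hF) (hFc.sSup_mem hF)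
  have hab := csInf_le_csSup hF hFc.bddBelow hFc.bddAbove
  have hnull : volume.real (Ioc (sInf F) (sSup F) ∩ M) = 0 := by
    linarith [add_measureReal_Ioc_inter hM.bddBelow hM.measurableSet hM.measure_lt_top.ne hab]
  rw [measureReal_eq_zero_iff (measure_ne_top_of_subset inter_subset_right
    hM.measure_lt_top.ne)] at hnull
  refine measure_mono_null ?_ hnull
  rintro z ⟨hzF, hz⟩
  exact ⟨⟨(csInf_le hFc.bddBelow hzF).lt_of_ne (Ne.symm hz), le_csSup hFc.bddAbove hzF⟩, hzF.1⟩

end piProj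

lemma Monotone.countable_setOf_nontrivial_fiber {f : ℝ → ℝ} (hf : Monotone f) :
    {t | ∃ x y, x < y ∧ f x = t ∧ f y = t}.Countable := by
  refine ((countable_range ((↑) : ℚ → ℝ)).image f).mono ?_
  rintro t ⟨x, y, hxy, rfl, hy⟩
  obtain ⟨q, hxq, hqy⟩ := exists_rat_btwn hxy
  exact ⟨q, mem_range_self q, le_antisymm (hy ▸ hf hqy.le) (hf hxq.le)⟩

lemma countable_ESet {M : Set ℝ} (hfin : volume M ≠ ⊤) : (ESet M).Countable := by
  refine (piProj.monotone hfin).countable_setOf_nontrivial_fiber.mono ?_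
  rintro t ⟨x, y, -, -, hxy, hx, hy⟩
  rcases hxy.lt_or_gt with h | h
  exacts [⟨x, y, h, hx, hy⟩, ⟨y, x, h, hy, hx⟩]

lemma le_of_piProj_eq_of_notMem {M : Set ℝ} (hM : BddBelow M) {y z : ℝ} (hy : y ∈ M)
    (hz : z ∈ M) (hzy : piProj M z = piProj M y)
    (hyN : y ∉ ⋃ s ∈ ESet M, ({w ∈ M | piProj M w = s} \ {sInf {w ∈ M | piProj M w = s}})) :
    y ≤ z := by
  rcases eq_or_ne z y with rfl | hne
  · exact le_rfl
  have hy_inf : y = sInf {w ∈ M | piProj M w = piProj M y} := by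
    have hE : piProj M y ∈ ESet M := ⟨z, y, hz, hy, hne, hzy, rfl⟩
    by_contra h
    exact hyN (mem_biUnion hE (mem_sdiff_of_mem ⟨hy, rfl⟩ h))
  exact hy_inf ▸ csInf_le (hM.mono fun _ hw => hw.1) ⟨hz, hzy⟩

theorem stmt18_general (K M : Set ℝ) (hM : IsCompact M)
    (φ ψ : ℝ → ℝ)
    (hφmono : StrictMonoOn φ M) (hφbij : Set.BijOn φ M K)
    (hψmono : StrictMonoOn ψ (Set.Icc (0 : ℝ) (volume M).toReal))
    (hcomm : ∀ y ∈ M, piProj K (φ y) = ψ (piProj M y)) :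
    let N : Set ℝ := ⋃ s ∈ ESet M,
      ({y ∈ M | piProj M y = s} \ {sInf {y ∈ M | piProj M y = s}})
    volume N = 0 ∧
    ∀ y ∈ M \ N, φ y = sigmaSel K (ψ (piProj M y)) := by
  have hfin : volume M ≠ ⊤ := hM.measure_lt_top.ne
  have hmem (y : ℝ) : piProj M y ∈ Icc 0 (volume M).toReal :=
    ⟨piProj.nonneg y, piProj.le_measureReal hfin y⟩
  refine ⟨(measure_biUnion_null_iff (countable_ESet hfin)).2 fun s _ =>
    piProj.volume_fiber_diff_sInf hM s, ?_⟩
  rintro y ⟨hy, hyN⟩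
  rw [sigmaSel, eq_comm]
  refine IsLeast.csInf_eq ⟨⟨hφbij.mapsTo hy, hcomm y hy⟩, ?_⟩
  rintro x ⟨hx, hxy⟩
  obtain ⟨z, hz, rfl⟩ := hφbij.surjOn hx
  have hzy : piProj M z = piProj M y :=
    hψmono.injOn (hmem z) (hmem y) (by rw [← hcomm z hz, hxy])
  exact hφmono.monotoneOn hy hz (le_of_piProj_eq_of_notMem hM.bddBelow hy hz hzy hyN)

theorem stmt18 (K M : Set ℝ) (hK : IsCompact K) (hM : IsCompact M)
    (hKpos : 0 < volume K) (hMpos : 0 < volume M)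
    (φ ψ : ℝ → ℝ)
    (hφmono : StrictMonoOn φ M) (hφbij : Set.BijOn φ M K)
    (hφcont : ContinuousOn φ M)
    (hψmono : StrictMonoOn ψ (Set.Icc (0 : ℝ) (volume M).toReal))
    (hψcont : ContinuousOn ψ (Set.Icc (0 : ℝ) (volume M).toReal))
    (hψbij : Set.BijOn ψ (Set.Icc (0 : ℝ) (volume M).toReal)
      (Set.Icc (0 : ℝ) (volume K).toReal))
    (hψE : ψ '' ESet M = ESet K)
    (hcomm : ∀ y ∈ M, piProj K (φ y) = ψ (piProj M y)) :
    let N : Set ℝ := ⋃ s ∈ ESet M,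
      ({y ∈ M | piProj M y = s} \ {sInf {y ∈ M | piProj M y = s}})
    volume N = 0 ∧
    ∀ y ∈ M \ N, φ y = sigmaSel K (ψ (piProj M y)) :=
  stmt18_general K M hM φ ψ hφmono hφbij hψmono hcomm
end
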